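/- Let k_e, σ > 0, ε̄, θ̄, s ≥ 0, let Γ ∈ ℝ^{p×p} be symmetric positive definite, define V_L(e, θ̃) ≜ ½ eᵀe + ½ θ̃ᵀΓ⁻¹θ̃, α₂ ≜ max(1, λ_max(Γ⁻¹)), b₀ ≜ min(k_e/2, σ/2), and b₁ ≜ ε̄²/(2k_e) + (σ/2)θ̄² + s. Let b₂ ∈ (0, b₀], let e ∈ ℝⁿ and θ̃ ∈ ℝᵖ with ‖z‖ ≜ √(‖e‖² + ‖θ̃‖²), and let c ≥ 0 satisfy c‖z‖ ≤ b₀ − b₂. Then −k_e‖e‖² + ε̄‖e‖ + c‖e‖‖z‖² − σ‖θ̃‖² + σθ̄‖θ̃‖ + s ≤ −(b₂/α₂) V_L(e, θ̃) + b₁. -/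

import Mathlib

open Matrix

/-! Young's inequality `ε̄‖e‖ ≤ (k_e/2)‖e‖² + ε̄²/(2k_e)` and its analogue for the `θ̄`-term absorb
the linear terms, leaving `−(k_e/2)‖e‖² − (σ/2)‖θ̃‖² ≤ −b₀‖z‖²`; the cubic term is at most
`(b₀ − b₂)‖z‖²` because `c‖e‖ ≤ c‖z‖`. Finally `V_L ≤ α₂‖z‖²`, since the quadratic form of `Γ⁻¹` is
bounded by its largest eigenvalue, so `−b₂‖z‖² ≤ −(b₂/α₂)V_L`. -/

lemma mul_le_half_mul_sq_add_sq_div {k : ℝ} (hk : 0 < k) (a x : ℝ) :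
    a * x ≤ k / 2 * x ^ 2 + a ^ 2 / (2 * k) := by
  have hsq : k / 2 * x ^ 2 + a ^ 2 / (2 * k) - a * x = (k * x - a) ^ 2 / (2 * k) := by
    field_simp
    ring
  have : 0 ≤ (k * x - a) ^ 2 / (2 * k) := by positivity
  linarith

namespace Matrix.IsHermitian

variable {n : Type*} [Fintype n] [DecidableEq n] {A : Matrix n n ℝ}

lemma dotProduct_mulVec_eq_sum_eigenvalues (hA : A.IsHermitian) (x : n → ℝ) :
    x ⬝ᵥ (A *ᵥ x) =
      ∑ i, hA.eigenvalues i * ((star (hA.eigenvectorUnitary : Matrix n n ℝ) *ᵥ x) i) ^ 2 := by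
  set U : Matrix n n ℝ := (hA.eigenvectorUnitary : Matrix n n ℝ)
  have hxU : x ᵥ* U = star U *ᵥ x := by
    rw [← mulVec_transpose, star_eq_conjTranspose, conjTranspose_eq_transpose_of_trivial]
  conv_lhs => rw [hA.spectral_theorem, Unitary.conjStarAlgAut_apply]
  rw [← mulVec_mulVec, ← mulVec_mulVec, dotProduct_mulVec x U, hxU]
  simp only [dotProduct, mulVec_diagonal, Function.comp_apply, RCLike.ofReal_real_eq_id, id]
  exact Finset.sum_congr rfl fun i _ => by ring

lemma dotProduct_mulVec_le_mul_dotProduct_self (hA : A.IsHermitian) {μ : ℝ}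
    (hμ : ∀ i, hA.eigenvalues i ≤ μ) (x : n → ℝ) :
    x ⬝ᵥ (A *ᵥ x) ≤ μ * (x ⬝ᵥ x) := by
  set U : Matrix n n ℝ := (hA.eigenvectorUnitary : Matrix n n ℝ)
  set y := star U *ᵥ x
  have hyy : y ⬝ᵥ y = x ⬝ᵥ x := by
    have hyU : y ᵥ* star U = U *ᵥ y := by
      rw [← mulVec_transpose, star_eq_conjTranspose, conjTranspose_eq_transpose_of_trivial,
        transpose_transpose]
    rw [dotProduct_mulVec, hyU, mulVec_mulVec, mem_unitaryGroup_iff.mp hA.eigenvectorUnitary.2,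
      one_mulVec]
  calc x ⬝ᵥ (A *ᵥ x) = ∑ i, hA.eigenvalues i * y i ^ 2 :=
        hA.dotProduct_mulVec_eq_sum_eigenvalues x
    _ ≤ ∑ i, μ * y i ^ 2 := by gcongr with i; exact hμ i
    _ = μ * (x ⬝ᵥ x) := by rw [← hyy, dotProduct, Finset.mul_sum]; simp only [sq]

end Matrix.IsHermitian

lemma half_sum_mul_self_add_half_quadForm_le {ι κ : Type*} [Fintype ι] [Fintype κ]
    [DecidableEq κ] {M : Matrix κ κ ℝ} (hM : M.IsHermitian) (e : EuclideanSpace ℝ ι)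
    (θ : EuclideanSpace ℝ κ) :
    (1 / 2) * (∑ i, e i * e i) + (1 / 2) * (∑ i, θ i * (M *ᵥ (fun j => θ j)) i) ≤
      max 1 (⨆ i, hM.eigenvalues i) * (‖e‖ ^ 2 + ‖θ‖ ^ 2) := by
  set α := max 1 (⨆ i, hM.eigenvalues i)
  have hα : ∀ i, hM.eigenvalues i ≤ α :=
    fun i => (le_ciSup (Finite.bddAbove_range _) i).trans (le_max_right _ _)
  have he : ∑ i, e i * e i = ‖e‖ ^ 2 := by rw [EuclideanSpace.real_norm_sq_eq]; simp only [sq]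
  have hθ : ∑ i, θ i * (M *ᵥ (fun j => θ j)) i ≤ α * ‖θ‖ ^ 2 := by
    rw [EuclideanSpace.real_norm_sq_eq]
    simpa only [dotProduct, sq] using
      hM.dotProduct_mulVec_le_mul_dotProduct_self hα (fun j => θ j)
  have hα₁ : 1 ≤ α := le_max_left _ _
  nlinarith [sq_nonneg ‖e‖, sq_nonneg ‖θ‖]

lemma drift_le_neg_mul_sq_add {ke σ εbar θbar s b₀ b₂ c x y z : ℝ} (hke : 0 < ke)
    (hσ : 0 < σ) (hc : 0 ≤ c) (hz : z ^ 2 = x ^ 2 + y ^ 2) (hxz : x ≤ z)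
    (hb₀e : b₀ ≤ ke / 2) (hb₀θ : b₀ ≤ σ / 2) (hcz : c * z ≤ b₀ - b₂) :
    -ke * x ^ 2 + εbar * x + c * x * z ^ 2 - σ * y ^ 2 + σ * θbar * y + s ≤
      -b₂ * z ^ 2 + (εbar ^ 2 / (2 * ke) + (σ / 2) * θbar ^ 2 + s) := by
  have hε := mul_le_half_mul_sq_add_sq_div hke εbar x
  have hθ := mul_le_half_mul_sq_add_sq_div hσ (σ * θbar) y
  have hθbar : (σ * θbar) ^ 2 / (2 * σ) = σ / 2 * θbar ^ 2 := by field_simp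
  have hcubic : c * x * z ^ 2 ≤ (b₀ - b₂) * z ^ 2 :=
    mul_le_mul_of_nonneg_right ((mul_le_mul_of_nonneg_left hxz hc).trans hcz) (sq_nonneg z)
  have hb₀z : b₀ * z ^ 2 ≤ ke / 2 * x ^ 2 + σ / 2 * y ^ 2 := by
    rw [hz, mul_add]
    gcongr
  linarith

theorem lyapunov_decrease_bound_general {n p : ℕ}
    (ke σ εbar θbar s : ℝ) (hke : 0 < ke) (hσ : 0 < σ)
    (Γ : Matrix (Fin p) (Fin p) ℝ) (hH : (Γ⁻¹).IsHermitian)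
    (e : EuclideanSpace ℝ (Fin n)) (θ : EuclideanSpace ℝ (Fin p)) (b₂ c : ℝ)
    (hc : 0 ≤ c) :
    let VL : ℝ := (1 / 2) * (∑ i, e i * e i) + (1 / 2) * (∑ i, θ i * (Γ⁻¹ *ᵥ (fun j => θ j)) i);
    let α₂ : ℝ := max 1 (⨆ i, hH.eigenvalues i);
    let z : ℝ := Real.sqrt (‖e‖ ^ 2 + ‖θ‖ ^ 2);
    let b₀ : ℝ := min (ke / 2) (σ / 2);
    let b₁ : ℝ := εbar ^ 2 / (2 * ke) + (σ / 2) * θbar ^ 2 + s;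
    0 < b₂ → b₂ ≤ b₀ → c * z ≤ b₀ - b₂ →
      -ke * ‖e‖ ^ 2 + εbar * ‖e‖ + c * ‖e‖ * z ^ 2 - σ * ‖θ‖ ^ 2 + σ * θbar * ‖θ‖ + s ≤
        -(b₂ / α₂) * VL + b₁ := by
  intro VL α₂ z b₀ b₁ hb₂ _ hcz
  have hz : z ^ 2 = ‖e‖ ^ 2 + ‖θ‖ ^ 2 := Real.sq_sqrt (by positivity)
  have hez : ‖e‖ ≤ z := Real.le_sqrt_of_sq_le (le_add_of_nonneg_right (sq_nonneg _))
  have hVL : VL ≤ α₂ * z ^ 2 := hz ▸ half_sum_mul_self_add_half_quadForm_le hH e θ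
  have hα₂ : 0 < α₂ := one_pos.trans_le (le_max_left _ _)
  have hdecay : (b₂ / α₂) * VL ≤ b₂ * z ^ 2 :=
    calc (b₂ / α₂) * VL ≤ (b₂ / α₂) * (α₂ * z ^ 2) := by gcongr
      _ = b₂ * z ^ 2 := by field_simp
  calc _ ≤ -b₂ * z ^ 2 + b₁ :=
        drift_le_neg_mul_sq_add hke hσ hc hz hez (min_le_left _ _) (min_le_right _ _) hcz
    _ ≤ -(b₂ / α₂) * VL + b₁ := by linarith

/-- Composite Lyapunov decrease bound: with `V_L(e,θ̃) = ½eᵀe + ½θ̃ᵀΓ⁻¹θ̃`,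
`α₂ = max(1, λ_max(Γ⁻¹))`, `b₀ = min(k_e/2, σ/2)`, `b₁ = ε̄²/(2k_e) + (σ/2)θ̄² + s`,
`b₂ ∈ (0, b₀]`, and `c‖z‖ ≤ b₀ − b₂` where `‖z‖ = √(‖e‖² + ‖θ̃‖²)`, one has
`−k_e‖e‖² + ε̄‖e‖ + c‖e‖‖z‖² − σ‖θ̃‖² + σθ̄‖θ̃‖ + s ≤ −(b₂/α₂)V_L(e,θ̃) + b₁`. -/
theorem lyapunov_decrease_bound {n p : ℕ} (hp : 0 < p)
    (ke σ εbar θbar s : ℝ) (hke : 0 < ke) (hσ : 0 < σ)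
    (hε : 0 ≤ εbar) (hθ : 0 ≤ θbar) (hs : 0 ≤ s)
    (Γ : Matrix (Fin p) (Fin p) ℝ) (hΓ : Γ.PosDef) (hH : (Γ⁻¹).IsHermitian)
    (e : EuclideanSpace ℝ (Fin n)) (θ : EuclideanSpace ℝ (Fin p)) (b₂ c : ℝ)
    (hc : 0 ≤ c) :
    let VL : ℝ := (1 / 2) * (∑ i, e i * e i) + (1 / 2) * (∑ i, θ i * (Γ⁻¹ *ᵥ (fun j => θ j)) i);
    let α₂ : ℝ := max 1 (⨆ i, hH.eigenvalues i);
    let z : ℝ := Real.sqrt (‖e‖ ^ 2 + ‖θ‖ ^ 2);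
    let b₀ : ℝ := min (ke / 2) (σ / 2);
    let b₁ : ℝ := εbar ^ 2 / (2 * ke) + (σ / 2) * θbar ^ 2 + s;
    0 < b₂ → b₂ ≤ b₀ → c * z ≤ b₀ - b₂ →
      -ke * ‖e‖ ^ 2 + εbar * ‖e‖ + c * ‖e‖ * z ^ 2 - σ * ‖θ‖ ^ 2 + σ * θbar * ‖θ‖ + s ≤
        -(b₂ / α₂) * VL + b₁ :=
  lyapunov_decrease_bound_general ke σ εbar θbar s hke hσ Γ hH e θ b₂ c hc
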